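/- arXiv:2002.09869 — 6 statements merged into one kernel-verified Lean document; each statement's English description precedes it below -/
import Mathlib

section
/- Let (X_n)_{n≥1} be a sequence of i.i.d. random variables with expectation μ, satisfying 0 ≤ X_n ≤ B almost surely for some constant B > 0. Then for every δ ∈ (0,1), with probability at least 1 − δ, simultaneously for all n ≥ 1 it holds that |∑_{i=1}^n (X_i − μ)| ≤ 2·√(B·μ·n·log(2n/δ)) + B·log(2n/δ). -/
/-! By convexity of `exp` on `[0, B]`, a variable with values in `[0, B]` and mean `m` has
moment generating function at most `exp (m (e^{tB} - 1) / B)`. By independence and Chernoff's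
bound, both tails `|S_n - n m| ≥ a` are then at most `exp (-t a + n m (e^{tB} - 1 - tB) / B)`
for every `t ≥ 0` (the lower tail is no worse since `sinh u ≥ u`). Writing `r² = n m / B` and
`ℓ² = L = log (2n/δ)`, the tilt `tB = 2ℓ / (r + ℓ)` brings the exponent down to `-2L`, because
`(1 - x) e^{2x} ≤ 1 + x` on `[0, 1]` (that is, `artanh x ≥ x`). So the `n`-th bound fails with
probability at most `2 (δ / 2n)²`, and `∑ δ² / (2n²) = δ² π² / 12 ≤ δ`. -/

open MeasureTheory ProbabilityTheory Finset Real

lemma one_sub_mul_exp_two_mul_le {x : ℝ} (hx0 : 0 ≤ x) (hx1 : x ≤ 1) :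
    (1 - x) * exp (2 * x) ≤ 1 + x := by
  rcases hx1.eq_or_lt with rfl | hx1
  · norm_num
  have hlog : 2 * x ≤ log (1 + x) - log (1 - x) := by
    simpa using le_hasSum (hasSum_log_sub_log_of_abs_lt_one (abs_lt.2 ⟨by linarith, hx1⟩)) 0
      fun k _ => by positivity
  have h1x : 0 < 1 - x := by linarith
  calc (1 - x) * exp (2 * x)
      ≤ (1 - x) * exp (log (1 + x) - log (1 - x)) := by gcongr
    _ = 1 + x := by
      rw [exp_sub, exp_log (by linarith), exp_log h1x]
      field_simp

lemma bennett_exponent_le {r ℓ : ℝ} (hr : 0 ≤ r) (hℓ : 0 < ℓ) :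
    r ^ 2 * (exp (2 * ℓ / (r + ℓ)) - 1 - 2 * ℓ / (r + ℓ))
      - 2 * ℓ / (r + ℓ) * (2 * r * ℓ + ℓ ^ 2) ≤ -2 * ℓ ^ 2 := by
  have hrℓ : 0 < r + ℓ := by linarith
  have key : r * exp (2 * ℓ / (r + ℓ)) ≤ r + 2 * ℓ := by
    have h := one_sub_mul_exp_two_mul_le (x := ℓ / (r + ℓ)) (by positivity)
      ((div_le_one hrℓ).2 (by linarith))
    rw [one_sub_div hrℓ.ne', one_add_div hrℓ.ne', ← mul_div_assoc, add_sub_cancel_right,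
      div_mul_eq_mul_div, div_le_div_iff_of_pos_right hrℓ] at h
    linarith
  rw [← sub_nonneg]
  have : -2 * ℓ ^ 2 - (r ^ 2 * (exp (2 * ℓ / (r + ℓ)) - 1 - 2 * ℓ / (r + ℓ))
      - 2 * ℓ / (r + ℓ) * (2 * r * ℓ + ℓ ^ 2)) = r * (r + 2 * ℓ - r * exp (2 * ℓ / (r + ℓ))) := by
    field_simp
    ring
  rw [this]
  exact mul_nonneg hr (by linarith)

lemma exp_neg_add_le_exp_sub {u : ℝ} (hu : 0 ≤ u) : exp (-u) - 1 + u ≤ exp u - 1 - u := by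
  have := Real.self_le_sinh_iff.2 hu
  rw [sinh_eq] at this
  linarith

lemma exp_mul_le_of_mem_Icc {B y : ℝ} (hB : 0 < B) (hy : y ∈ Set.Icc 0 B) (t : ℝ) :
    exp (t * y) ≤ 1 + y * (exp (t * B) - 1) / B := by
  have hyB : y / B ≤ 1 := (div_le_one hB).2 hy.2
  have hconv := convexOn_exp.2 (Set.mem_univ 0) (Set.mem_univ (t * B)) (sub_nonneg.2 hyB)
    (div_nonneg hy.1 hB.le) (sub_add_cancel 1 (y / B))
  simp only [smul_eq_mul] at hconv
  calc exp (t * y) = exp ((1 - y / B) * 0 + y / B * (t * B)) := by congr 1; field_simp; ring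
    _ ≤ (1 - y / B) * exp 0 + y / B * exp (t * B) := hconv
    _ = 1 + y * (exp (t * B) - 1) / B := by rw [exp_zero]; field_simp; ring

section

variable {Ω ι : Type*} {m0 : MeasurableSpace Ω} {μ : Measure Ω} [IsProbabilityMeasure μ] {B : ℝ}

lemma mgf_le_exp_of_mem_Icc {Y : Ω → ℝ} (hB : 0 < B) (hY : AEMeasurable Y μ)
    (hbdd : ∀ᵐ ω ∂μ, Y ω ∈ Set.Icc 0 B) (t : ℝ) :
    mgf Y μ t ≤ exp (μ[Y] * (exp (t * B) - 1) / B) := by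
  have hint : Integrable Y μ := .of_mem_Icc 0 B hY hbdd
  calc mgf Y μ t ≤ ∫ ω, (1 + Y ω * (exp (t * B) - 1) / B) ∂μ :=
        integral_mono_ae (integrable_exp_mul_of_mem_Icc hY hbdd)
          ((integrable_const 1).add ((hint.mul_const _).div_const _))
          (hbdd.mono fun ω hω => exp_mul_le_of_mem_Icc hB hω t)
    _ = 1 + μ[Y] * (exp (t * B) - 1) / B := by
        rw [integral_add (integrable_const 1) ((hint.mul_const _).div_const _), integral_div,
          integral_mul_const]
        simp
    _ ≤ exp (μ[Y] * (exp (t * B) - 1) / B) := by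
        linarith [add_one_le_exp (μ[Y] * (exp (t * B) - 1) / B)]

variable {X : ι → Ω → ℝ} {m : ℝ}

lemma mgf_sum_le_exp_of_mem_Icc (hB : 0 < B) (hmeas : ∀ i, Measurable (X i))
    (hindep : iIndepFun X μ) (hmean : ∀ i, μ[X i] = m)
    (hbdd : ∀ i, ∀ᵐ ω ∂μ, X i ω ∈ Set.Icc 0 B) (s : Finset ι) (t : ℝ) :
    mgf (∑ i ∈ s, X i) μ t ≤ exp (#s * m * (exp (t * B) - 1) / B) := by
  rw [hindep.mgf_sum hmeas]
  calc ∏ i ∈ s, mgf (X i) μ t ≤ ∏ _i ∈ s, exp (m * (exp (t * B) - 1) / B) :=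
        prod_le_prod (fun i _ => mgf_nonneg) fun i _ =>
          hmean i ▸ mgf_le_exp_of_mem_Icc hB (hmeas i).aemeasurable (hbdd i) t
    _ = exp (#s * m * (exp (t * B) - 1) / B) := by
        rw [prod_const, ← exp_nat_mul]
        ring_nf

lemma measureReal_abs_sum_sub_ge_le (hB : 0 < B) (hm : 0 ≤ m) (hmeas : ∀ i, Measurable (X i))
    (hindep : iIndepFun X μ) (hmean : ∀ i, μ[X i] = m)
    (hbdd : ∀ i, ∀ᵐ ω ∂μ, X i ω ∈ Set.Icc 0 B) (s : Finset ι) {t : ℝ} (ht : 0 ≤ t) (a : ℝ) :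
    μ.real {ω | a ≤ |∑ i ∈ s, (X i ω - m)|} ≤
      2 * exp (-t * a + #s * m * (exp (t * B) - 1 - t * B) / B) := by
  set N := (#s : ℝ) * m
  have hN : 0 ≤ N := by positivity
  have hint : ∀ t, Integrable (fun ω => exp (t * (∑ i ∈ s, X i) ω)) μ := fun t =>
    hindep.integrable_exp_mul_sum hmeas fun i _ =>
      integrable_exp_mul_of_mem_Icc (hmeas i).aemeasurable (hbdd i)
  have hupper : μ.real {ω | N + a ≤ (∑ i ∈ s, X i) ω} ≤
      exp (-t * a + N * (exp (t * B) - 1 - t * B) / B) := by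
    refine (measure_ge_le_exp_mul_mgf _ ht (hint t)).trans ?_
    calc exp (-t * (N + a)) * mgf (∑ i ∈ s, X i) μ t
        ≤ exp (-t * (N + a)) * exp (N * (exp (t * B) - 1) / B) := by
          gcongr; exact mgf_sum_le_exp_of_mem_Icc hB hmeas hindep hmean hbdd s t
      _ = _ := by rw [← exp_add]; congr 1; field_simp; ring
  have hlower : μ.real {ω | (∑ i ∈ s, X i) ω ≤ N - a} ≤
      exp (-t * a + N * (exp (t * B) - 1 - t * B) / B) := by
    refine (measure_le_le_exp_mul_mgf _ (neg_nonpos.2 ht) (hint (-t))).trans ?_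
    calc exp (- -t * (N - a)) * mgf (∑ i ∈ s, X i) μ (-t)
        ≤ exp (- -t * (N - a)) * exp (N * (exp (-t * B) - 1) / B) := by
          gcongr; exact mgf_sum_le_exp_of_mem_Icc hB hmeas hindep hmean hbdd s (-t)
      _ = exp (-t * a + N * (exp (-(t * B)) - 1 + t * B) / B) := by
          rw [← exp_add]; congr 1; field_simp; ring
      _ ≤ _ := by
          gcongr
          exact exp_neg_add_le_exp_sub (by positivity)
  have hsub : {ω | a ≤ |∑ i ∈ s, (X i ω - m)|} ⊆
      {ω | N + a ≤ (∑ i ∈ s, X i) ω} ∪ {ω | (∑ i ∈ s, X i) ω ≤ N - a} := by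
    intro ω hω
    simp only [Set.mem_ofPred_eq, sum_sub_distrib, sum_const, nsmul_eq_mul, le_abs'] at hω
    simp only [Set.mem_union, Set.mem_ofPred_eq, Finset.sum_apply]
    rcases hω with h | h
    · right; linarith
    · left; linarith
  calc μ.real {ω | a ≤ |∑ i ∈ s, (X i ω - m)|}
      ≤ μ.real {ω | N + a ≤ (∑ i ∈ s, X i) ω} + μ.real {ω | (∑ i ∈ s, X i) ω ≤ N - a} :=
        (measureReal_mono hsub).trans (measureReal_union_le _ _)
    _ ≤ _ := by linarith

lemma measureReal_bernstein_le (hB : 0 < B) (hm : 0 ≤ m) (hmeas : ∀ i, Measurable (X i))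
    (hindep : iIndepFun X μ) (hmean : ∀ i, μ[X i] = m)
    (hbdd : ∀ i, ∀ᵐ ω ∂μ, X i ω ∈ Set.Icc 0 B) (s : Finset ι) {L : ℝ} (hL : 0 < L) :
    μ.real {ω | 2 * √(B * m * #s * L) + B * L ≤ |∑ i ∈ s, (X i ω - m)|} ≤ 2 * exp (-2 * L) := by
  set r := √(#s * m / B)
  set ℓ := √L
  have hr : 0 ≤ r := sqrt_nonneg _
  have hℓ : 0 < ℓ := sqrt_pos.2 hL
  have hr2 : r ^ 2 = #s * m / B := sq_sqrt (by positivity)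
  have hℓ2 : ℓ ^ 2 = L := sq_sqrt hL.le
  have hsqrt : √(B * m * #s * L) = B * r * ℓ := by
    rw [← sqrt_sq (by positivity : 0 ≤ B * r * ℓ), mul_pow, mul_pow, hr2, hℓ2]
    congr 1
    field_simp
  set u := 2 * ℓ / (r + ℓ)
  refine (measureReal_abs_sum_sub_ge_le hB hm hmeas hindep hmean hbdd s
    (t := u / B) (by positivity) _).trans ?_
  gcongr
  calc -(u / B) * (2 * √(B * m * #s * L) + B * L) + #s * m * (exp (u / B * B) - 1 - u / B * B) / B
      = r ^ 2 * (exp u - 1 - u) - u * (2 * r * ℓ + ℓ ^ 2) := by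
        rw [hsqrt, hr2, ← hℓ2]
        field_simp
        ring
    _ ≤ -2 * ℓ ^ 2 := bennett_exponent_le hr hℓ
    _ = -2 * L := by rw [hℓ2]

lemma measure_bernstein_failure_le (hB : 0 < B) (hm : 0 ≤ m) (hmeas : ∀ i, Measurable (X i))
    (hindep : iIndepFun X μ) (hmean : ∀ i, μ[X i] = m)
    (hbdd : ∀ i, ∀ᵐ ω ∂μ, X i ω ∈ Set.Icc 0 B) (s : Finset ι) {δ : ℝ} (hδ : 0 < δ)
    (hδs : δ < 2 * #s) :
    μ {ω | ¬ |∑ i ∈ s, (X i ω - m)| ≤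
        2 * √(B * m * #s * log (2 * #s / δ)) + B * log (2 * #s / δ)} ≤
      ENNReal.ofReal (δ ^ 2 / 2 * (1 / (#s : ℝ) ^ 2)) := by
  have hL : 0 < log (2 * #s / δ) := log_pos ((one_lt_div hδ).2 hδs)
  calc _ ≤ μ {ω | 2 * √(B * m * #s * log (2 * #s / δ)) + B * log (2 * #s / δ) ≤
          |∑ i ∈ s, (X i ω - m)|} :=
        measure_mono fun ω hω => (not_le.1 hω).le
    _ ≤ ENNReal.ofReal (2 * exp (-2 * log (2 * #s / δ))) := by
        rw [← ofReal_measureReal]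
        exact ENNReal.ofReal_le_ofReal (measureReal_bernstein_le hB hm hmeas hindep hmean hbdd s hL)
    _ = ENNReal.ofReal (δ ^ 2 / 2 * (1 / (#s : ℝ) ^ 2)) := by
        rw [show -2 * log (2 * #s / δ) = log ((2 * #s / δ)⁻¹ ^ 2) by rw [log_pow, log_inv]; ring,
          exp_log (pow_pos (inv_pos.2 (div_pos (by linarith) hδ)) 2)]
        field_simp

lemma ofReal_one_sub_le_measure_forall {P : ℕ → Ω → Prop} {ε : ℕ → ℝ} {S : ℝ} (hε : HasSum ε S)
    (hε0 : ∀ n, 0 ≤ ε n) (h : ∀ n, μ {ω | ¬ P n ω} ≤ ENNReal.ofReal (ε n)) :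
    ENNReal.ofReal (1 - S) ≤ μ {ω | ∀ n, P n ω} := by
  have hcompl : μ {ω | ∀ n, P n ω}ᶜ ≤ ENNReal.ofReal S := by
    calc _ = μ (⋃ n, {ω | ¬ P n ω}) := by
          congr 1
          ext ω
          simp only [Set.mem_compl_iff, Set.mem_iUnion, Set.mem_ofPred_eq, not_forall]
      _ ≤ ∑' n, ENNReal.ofReal (ε n) := (measure_iUnion_le _).trans (ENNReal.tsum_le_tsum h)
      _ = ENNReal.ofReal S := by rw [← ENNReal.ofReal_tsum_of_nonneg hε0 hε.summable, hε.tsum_eq]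
  rw [ENNReal.ofReal_sub _ (hε.nonneg hε0), ENNReal.ofReal_one, tsub_le_iff_right]
  calc 1 = μ Set.univ := measure_univ.symm
    _ ≤ _ := measure_univ_le_add_compl _
    _ ≤ _ := by gcongr

end

theorem anytime_bernstein_general
    {Ω : Type*} {m0 : MeasurableSpace Ω} {μ : Measure Ω} [IsProbabilityMeasure μ]
    (X : ℕ → Ω → ℝ) (B m : ℝ) (hB : 0 < B)
    (hmeas : ∀ i, Measurable (X i))
    (hindep : iIndepFun X μ)
    (hmean : ∀ i, ∫ ω, X i ω ∂μ = m)
    (hbdd : ∀ i, ∀ᵐ ω ∂μ, X i ω ∈ Set.Icc (0 : ℝ) B)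
    (δ : ℝ) (hδ : δ ∈ Set.Ioo (0 : ℝ) 1) :
    ENNReal.ofReal (1 - δ) ≤
      μ {ω | ∀ n : ℕ, 1 ≤ n →
        |∑ i ∈ Finset.Icc 1 n, (X i ω - m)| ≤
          2 * Real.sqrt (B * m * n * Real.log (2 * n / δ)) + B * Real.log (2 * n / δ)} := by
  obtain ⟨hδ0, hδ1⟩ := hδ
  have hm : 0 ≤ m := hmean 0 ▸ integral_nonneg_of_ae ((hbdd 0).mono fun ω h => h.1)
  have hπ : π ^ 2 < 12 := by nlinarith [pi_lt_d2, pi_pos]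
  refine (ENNReal.ofReal_le_ofReal ?_).trans <| ofReal_one_sub_le_measure_forall
    (hasSum_zeta_two.mul_left (δ ^ 2 / 2)) (fun n => by positivity) fun n => ?_
  · nlinarith
  rcases Nat.eq_zero_or_pos n with rfl | hn
  · simp
  have hn' : (1 : ℝ) ≤ n := by exact_mod_cast hn
  have hfail := measure_bernstein_failure_le hB hm hmeas hindep hmean hbdd (Icc 1 n) hδ0
    (by simp only [Nat.card_Icc, Nat.add_sub_cancel]; linarith)
  simp only [Nat.card_Icc, Nat.add_sub_cancel] at hfail
  exact (measure_mono fun ω hω => (Classical.not_imp.1 hω).2).trans hfail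

/-- Anytime Bernstein inequality: for an i.i.d. sequence `(X n)` with expectation `m`
and `0 ≤ X n ≤ B` almost surely, with probability at least `1 - δ`, simultaneously for
all `n ≥ 1`, `|∑_{i=1}^n (X i - m)| ≤ 2√(B m n log(2n/δ)) + B log(2n/δ)`. -/
theorem anytime_bernstein
    {Ω : Type*} {m0 : MeasurableSpace Ω} {μ : Measure Ω} [IsProbabilityMeasure μ]
    (X : ℕ → Ω → ℝ) (B m : ℝ) (hB : 0 < B)
    (hmeas : ∀ i, Measurable (X i))
    (hindep : iIndepFun X μ)
    (hident : ∀ i j, IdentDistrib (X i) (X j) μ μ)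
    (hmean : ∀ i, ∫ ω, X i ω ∂μ = m)
    (hbdd : ∀ i, ∀ᵐ ω ∂μ, X i ω ∈ Set.Icc (0 : ℝ) B)
    (δ : ℝ) (hδ : δ ∈ Set.Ioo (0 : ℝ) 1) :
    ENNReal.ofReal (1 - δ) ≤
      μ {ω | ∀ n : ℕ, 1 ≤ n →
        |∑ i ∈ Finset.Icc 1 n, (X i ω - m)| ≤
          2 * Real.sqrt (B * m * n * Real.log (2 * n / δ)) + B * Real.log (2 * n / δ)} :=
  anytime_bernstein_general (m0 := m0) X B m hB hmeas hindep hmean hbdd δ hδ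
end

section
/- Let n ≥ 1 be an integer, let μ ≥ 0, B ≥ 0, L ≥ 0 be real numbers, and let x_1, …, x_n be nonnegative real numbers. If μ·n − ∑_{i=1}^n x_i ≤ 2·√(B·μ·n·L) + B·L, then √μ ≤ √((1/n)·∑_{i=1}^n x_i) + 3·√(B·L/n). -/
open Finset

/-- Solving the quadratic inequality in `√μ` arising in the anytime Bernstein bound:
if `μ n - ∑_{i=1}^n x i ≤ 2√(B μ n L) + B L`, then
`√μ ≤ √((1/n) ∑_{i=1}^n x i) + 3 √(B L / n)`. -/
theorem sqrt_mean_bound_of_bernstein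
    (n : ℕ) (hn : 1 ≤ n) (μ B L : ℝ) (hμ : 0 ≤ μ) (hB : 0 ≤ B) (hL : 0 ≤ L)
    (x : ℕ → ℝ) (hx : ∀ i, 0 ≤ x i)
    (h : μ * n - ∑ i ∈ Finset.Icc 1 n, x i ≤ 2 * Real.sqrt (B * μ * n * L) + B * L) :
    Real.sqrt μ ≤
      Real.sqrt ((1 / n) * ∑ i ∈ Finset.Icc 1 n, x i) + 3 * Real.sqrt (B * L / n) := by
  have hn' : (0:ℝ) < n := by exact_mod_cast hn
  set S := ∑ i ∈ Finset.Icc 1 n, x i with hS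
  have hS0 : 0 ≤ S := Finset.sum_nonneg fun i _ => hx i
  set a := Real.sqrt μ with ha
  set b := Real.sqrt (B * L / n) with hb
  set s := Real.sqrt ((1/n) * S) with hs
  have ha0 : 0 ≤ a := Real.sqrt_nonneg _
  have hb0 : 0 ≤ b := Real.sqrt_nonneg _
  have hs0 : 0 ≤ s := Real.sqrt_nonneg _
  have ha2 : a^2 = μ := Real.sq_sqrt hμ
  have hb2 : b^2 = B*L/n := Real.sq_sqrt (by positivity)
  have hs2 : s^2 = (1/n)*S := Real.sq_sqrt (by positivity)
  have hab : Real.sqrt (B * μ * n * L) = a * b * n := by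
    rw [show B * μ * n * L = (a*b*n)^2 by
      rw [mul_pow, mul_pow, ha2, hb2]; field_simp]
    exact Real.sqrt_sq (by positivity)
  rw [hab] at h
  have key : (a - b)^2 ≤ (s + 2*b)^2 := by
    have h1 : a^2 * n - S ≤ 2*(a*b*n) + B*L := by rw [ha2]; linarith
    have h2 : b^2 * n = B*L := by rw [hb2]; field_simp
    have h3 : s^2 * n = S := by rw [hs2]; field_simp
    nlinarith [mul_nonneg hs0 hb0, mul_nonneg (mul_nonneg hs0 hb0) hn'.le,
      sq_nonneg b, mul_nonneg (sq_nonneg b) hn'.le]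
  have h2 : a - b ≤ s + 2*b := by nlinarith [key]
  linarith
end

section
/- Let (X_n)_{n≥1} be a sequence of random variables adapted to a filtration (F_n)_{n≥0} with 0 ≤ X_n ≤ B almost surely for some constant B > 0. Then for every δ ∈ (0,1), with probability at least 1 − δ, simultaneously for all n ≥ 1 it holds that ∑_{i=1}^n E[X_i | F_{i−1}] ≤ 2·∑_{i=1}^n X_i + 4·B·log(2n/δ). -/
open MeasureTheory ProbabilityTheory Finset Real

/-!
With `E i = E[X i | ℱ (i-1)]`, the process `exp (∑_{i ≤ n} (E i - 2 X i) / (2B))` is a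
nonnegative supermartingale: by convexity `exp (-y) ≤ 1 - y / 2` on `[0, 1]`, so
`E[exp (-X i / B) | ℱ (i-1)] ≤ exp (-E i / (2B))`. Its expectation is therefore at most `1`,
and the Chernoff bound at level `2 log (2n/δ)` bounds the failure probability at time `n` by
`δ² / (4n²)`. A union bound over `n` costs `δ² π² / 24 ≤ δ`.
-/

lemma exp_neg_le_one_sub_half {y : ℝ} (hy0 : 0 ≤ y) (hy1 : y ≤ 1) : exp (-y) ≤ 1 - y / 2 := by
  have hchord := convexOn_exp.2 (Set.mem_univ (-1 : ℝ)) (Set.mem_univ 0) hy0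
    (sub_nonneg.2 hy1) (add_sub_cancel y 1)
  simp only [smul_eq_mul, mul_neg_one, mul_zero, add_zero, exp_zero] at hchord
  have hexp : exp (-1) ≤ 1 / 2 := by
    rw [exp_neg, inv_le_comm₀ (exp_pos 1) (by norm_num)]
    linarith [add_one_le_exp (1 : ℝ)]
  nlinarith

section ConditionalExpectation

variable {Ω : Type*} {m m0 : MeasurableSpace Ω} {μ : Measure Ω}

lemma ae_condExp_mem_Icc [IsFiniteMeasure μ] (hm : m ≤ m0) {Y : Ω → ℝ} (hY : Integrable Y μ)
    {a b : ℝ} (hbd : ∀ᵐ ω ∂μ, Y ω ∈ Set.Icc a b) : ∀ᵐ ω ∂μ, μ[Y | m] ω ∈ Set.Icc a b := by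
  have hlower := condExp_mono (m := m) (integrable_const a) hY
    (by filter_upwards [hbd] with ω hω using hω.1)
  have hupper := condExp_mono (m := m) hY (integrable_const b)
    (by filter_upwards [hbd] with ω hω using hω.2)
  rw [condExp_const hm] at hlower hupper
  filter_upwards [hlower, hupper] with ω h1 h2 using ⟨h1, h2⟩

lemma integrable_exp_neg_div [IsFiniteMeasure μ] {B : ℝ} (hB : 0 < B) {Y : Ω → ℝ}
    (hY : Integrable Y μ) (hY0 : 0 ≤ᵐ[μ] Y) : Integrable (fun ω ↦ exp (-(Y ω / B))) μ :=
  .of_mem_Icc 0 1 (hY.div_const B).aemeasurable.neg.exp <| by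
    filter_upwards [hY0] with ω hω
    exact ⟨(exp_pos _).le, exp_le_one_iff.2 (neg_nonpos.2 (div_nonneg hω hB.le))⟩

lemma condExp_exp_neg_div_le [IsFiniteMeasure μ] (hm : m ≤ m0) {B : ℝ} (hB : 0 < B)
    {Y : Ω → ℝ} (hY : Integrable Y μ) (hbd : ∀ᵐ ω ∂μ, Y ω ∈ Set.Icc 0 B) :
    μ[fun ω ↦ exp (-(Y ω / B)) | m] ≤ᵐ[μ] fun ω ↦ exp (-(μ[Y | m] ω / (2 * B))) := by
  have hchord : (fun ω ↦ exp (-(Y ω / B))) ≤ᵐ[μ] (fun _ ↦ (1 : ℝ)) - (2 * B)⁻¹ • Y := by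
    filter_upwards [hbd] with ω ⟨hY0, hYB⟩
    have := exp_neg_le_one_sub_half (div_nonneg hY0 hB.le) ((div_le_one hB).2 hYB)
    simp only [Pi.sub_apply, Pi.smul_apply, smul_eq_mul]
    convert this using 1
    field_simp
  have hlinear : μ[(fun _ ↦ (1 : ℝ)) - (2 * B)⁻¹ • Y | m] =ᵐ[μ]
      (fun _ ↦ (1 : ℝ)) - (2 * B)⁻¹ • μ[Y | m] := by
    filter_upwards [condExp_sub (integrable_const 1) (hY.smul (2 * B)⁻¹) m,
      condExp_smul (μ := μ) (2 * B)⁻¹ Y m] with ω h1 h2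
    rw [h1, Pi.sub_apply, h2, condExp_const hm, Pi.sub_apply]
  filter_upwards [condExp_mono (m := m) (integrable_exp_neg_div hB hY (hbd.mono fun _ hω ↦ hω.1))
      ((integrable_const 1).sub (hY.smul _)) hchord, hlinear]
    with ω hmono hlin
  calc μ[fun ω ↦ exp (-(Y ω / B)) | m] ω ≤ 1 - (2 * B)⁻¹ * μ[Y | m] ω := by
        simpa only [hlin, Pi.sub_apply, Pi.smul_apply, smul_eq_mul] using hmono
    _ ≤ exp (-(μ[Y | m] ω / (2 * B))) := by
        rw [inv_mul_eq_div]
        linarith [add_one_le_exp (-(μ[Y | m] ω / (2 * B)))]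

lemma integral_mul_le_of_condExp_le (hm : m ≤ m0) [SigmaFinite (μ.trim hm)] {f h g : Ω → ℝ}
    (hf : StronglyMeasurable[m] f) (hf0 : 0 ≤ᵐ[μ] f) (hh : Integrable h μ)
    (hfh : Integrable (f * h) μ) (hfg : Integrable (f * g) μ) (hle : μ[h | m] ≤ᵐ[μ] g) :
    ∫ ω, f ω * h ω ∂μ ≤ ∫ ω, f ω * g ω ∂μ := by
  have hpull : μ[f * h | m] =ᵐ[μ] f * μ[h | m] := condExp_mul_of_stronglyMeasurable_left hf hfh hh
  calc ∫ ω, f ω * h ω ∂μ = ∫ ω, μ[f * h | m] ω ∂μ := (integral_condExp hm).symm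
    _ = ∫ ω, f ω * μ[h | m] ω ∂μ := integral_congr_ae hpull
    _ ≤ ∫ ω, f ω * g ω ∂μ := integral_mono_ae (integrable_condExp.congr hpull) hfg <| by
        filter_upwards [hf0, hle] with ω h0 h1 using mul_le_mul_of_nonneg_left h1 h0

lemma measure_ge_le_exp_neg [IsFiniteMeasure μ] {S : Ω → ℝ} (hS : Integrable (fun ω ↦ exp (S ω)) μ)
    (hS1 : ∫ ω, exp (S ω) ∂μ ≤ 1) (ε : ℝ) : μ {ω | ε ≤ S ω} ≤ ENNReal.ofReal (exp (-ε)) := by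
  have hchernoff := measure_ge_le_exp_mul_mgf ε zero_le_one (by simpa only [one_mul] using hS)
  rw [mgf] at hchernoff
  simp only [one_mul, neg_mul] at hchernoff
  rw [← ofReal_measureReal]
  exact ENNReal.ofReal_le_ofReal (hchernoff.trans (mul_le_of_le_one_right (exp_pos _).le hS1))

end ConditionalExpectation

section CompensatedSum

variable {Ω : Type*} {m0 : MeasurableSpace Ω}

noncomputable def compensatedSum (μ : Measure Ω) (ℱ : Filtration ℕ m0) (X : ℕ → Ω → ℝ) (B : ℝ)
    (n : ℕ) (ω : Ω) : ℝ :=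
  ∑ i ∈ Icc 1 n, (μ[X i | ℱ (i - 1)] ω - 2 * X i ω) / (2 * B)

variable {μ : Measure Ω} {ℱ : Filtration ℕ m0} {X : ℕ → Ω → ℝ} {B : ℝ}

lemma compensatedSum_succ (n : ℕ) (ω : Ω) :
    compensatedSum μ ℱ X B (n + 1) ω =
      compensatedSum μ ℱ X B n ω + (μ[X (n + 1) | ℱ n] ω - 2 * X (n + 1) ω) / (2 * B) :=
  sum_Icc_succ_top (Nat.le_add_left 1 n) _

lemma stronglyMeasurable_compensatedSum (hadp : ∀ n, 1 ≤ n → StronglyMeasurable[ℱ n] (X n))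
    (n : ℕ) : StronglyMeasurable[ℱ n] (compensatedSum μ ℱ X B n) := by
  unfold compensatedSum
  refine stronglyMeasurable_fun_sum _ fun i hi ↦ ?_
  obtain ⟨hi1, hin⟩ := mem_Icc.1 hi
  exact (((stronglyMeasurable_condExp.mono (ℱ.mono (by omega))).sub
    (stronglyMeasurable_const.mul ((hadp i hi1).mono (ℱ.mono hin)))).measurable.div_const
      _).stronglyMeasurable

lemma integrable_of_adapted_of_mem_Icc [IsFiniteMeasure μ]
    (hadp : ∀ n, 1 ≤ n → StronglyMeasurable[ℱ n] (X n))
    (hbdd : ∀ n, 1 ≤ n → ∀ᵐ ω ∂μ, X n ω ∈ Set.Icc 0 B) {n : ℕ} (hn : 1 ≤ n) :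
    Integrable (X n) μ :=
  .of_mem_Icc 0 B ((hadp n hn).mono (ℱ.le n)).measurable.aemeasurable (hbdd n hn)

lemma integrable_exp_compensatedSum [IsFiniteMeasure μ] (hB : 0 < B)
    (hadp : ∀ n, 1 ≤ n → StronglyMeasurable[ℱ n] (X n))
    (hbdd : ∀ n, 1 ≤ n → ∀ᵐ ω ∂μ, X n ω ∈ Set.Icc 0 B) (n : ℕ) :
    Integrable (fun ω ↦ exp (compensatedSum μ ℱ X B n ω)) μ := by
  refine .of_mem_Icc 0 (exp n)
    ((stronglyMeasurable_compensatedSum hadp n).mono (ℱ.le n)).measurable.exp.aemeasurable ?_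
  have hterms : ∀ᵐ ω ∂μ, ∀ i ∈ Icc 1 n, μ[X i | ℱ (i - 1)] ω ≤ B ∧ 0 ≤ X i ω := by
    refine (Filter.eventually_all_finset _).2 fun i hi ↦ ?_
    have hi1 := (mem_Icc.1 hi).1
    filter_upwards [ae_condExp_mem_Icc (ℱ.le _) (integrable_of_adapted_of_mem_Icc hadp hbdd hi1)
      (hbdd i hi1), hbdd i hi1] with ω hE hX using ⟨hE.2, hX.1⟩
  filter_upwards [hterms] with ω hω
  refine ⟨(exp_pos _).le, exp_le_exp.2 ?_⟩
  calc compensatedSum μ ℱ X B n ω ≤ ∑ _i ∈ Icc 1 n, (1 : ℝ) := by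
        refine sum_le_sum fun i hi ↦ ?_
        rw [div_le_one (by positivity)]
        linarith [hω i hi]
    _ = n := by simp

lemma integral_exp_compensatedSum_succ_le [IsFiniteMeasure μ] (hB : 0 < B)
    (hadp : ∀ n, 1 ≤ n → StronglyMeasurable[ℱ n] (X n))
    (hbdd : ∀ n, 1 ≤ n → ∀ᵐ ω ∂μ, X n ω ∈ Set.Icc 0 B) (n : ℕ) :
    ∫ ω, exp (compensatedSum μ ℱ X B (n + 1) ω) ∂μ ≤
      ∫ ω, exp (compensatedSum μ ℱ X B n ω) ∂μ := by
  set E := μ[X (n + 1) | ℱ n]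
  set F := fun ω ↦ exp (compensatedSum μ ℱ X B n ω + E ω / (2 * B))
  have hbdd' := hbdd (n + 1) (Nat.le_add_left 1 n)
  have hint := integrable_exp_compensatedSum hB hadp hbdd
  have hXint := integrable_of_adapted_of_mem_Icc hadp hbdd (Nat.le_add_left 1 n)
  have hsplit : ∀ ω, exp (compensatedSum μ ℱ X B (n + 1) ω) = F ω * exp (-(X (n + 1) ω / B)) := by
    intro ω
    rw [compensatedSum_succ, ← exp_add]
    congr 1
    field_simp
    ring
  have hmerge : ∀ ω, F ω * exp (-(E ω / (2 * B))) = exp (compensatedSum μ ℱ X B n ω) := by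
    intro ω
    rw [← exp_add, add_neg_cancel_right]
  have hF : StronglyMeasurable[ℱ n] F :=
    ((stronglyMeasurable_compensatedSum hadp n).measurable.add
      (stronglyMeasurable_condExp.measurable.div_const _)).exp.stronglyMeasurable
  calc ∫ ω, exp (compensatedSum μ ℱ X B (n + 1) ω) ∂μ
      = ∫ ω, F ω * exp (-(X (n + 1) ω / B)) ∂μ := integral_congr_ae (.of_forall hsplit)
    _ ≤ ∫ ω, F ω * exp (-(E ω / (2 * B))) ∂μ :=
        integral_mul_le_of_condExp_le (ℱ.le n) hF (.of_forall fun ω ↦ (exp_pos _).le)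
          (integrable_exp_neg_div hB hXint (hbdd'.mono fun _ hω ↦ hω.1))
          (by simpa only [Pi.mul_def, ← hsplit] using hint (n + 1))
          (by simpa only [Pi.mul_def, hmerge] using hint n)
          (condExp_exp_neg_div_le (ℱ.le n) hB hXint hbdd')
    _ = ∫ ω, exp (compensatedSum μ ℱ X B n ω) ∂μ := by simp only [hmerge]

lemma integral_exp_compensatedSum_le_one [IsProbabilityMeasure μ] (hB : 0 < B)
    (hadp : ∀ n, 1 ≤ n → StronglyMeasurable[ℱ n] (X n))
    (hbdd : ∀ n, 1 ≤ n → ∀ᵐ ω ∂μ, X n ω ∈ Set.Icc 0 B) (n : ℕ) :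
    ∫ ω, exp (compensatedSum μ ℱ X B n ω) ∂μ ≤ 1 := by
  induction n with
  | zero => simp [compensatedSum]
  | succ n ih => exact (integral_exp_compensatedSum_succ_le hB hadp hbdd n).trans ih

lemma measure_not_sum_condExp_le_le [IsProbabilityMeasure μ] (hB : 0 < B)
    (hadp : ∀ n, 1 ≤ n → StronglyMeasurable[ℱ n] (X n))
    (hbdd : ∀ n, 1 ≤ n → ∀ᵐ ω ∂μ, X n ω ∈ Set.Icc 0 B) {δ : ℝ} (hδ : 0 < δ) {n : ℕ}
    (hn : 1 ≤ n) :
    μ {ω | ¬ ∑ i ∈ Icc 1 n, μ[X i | ℱ (i - 1)] ω ≤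
        2 * ∑ i ∈ Icc 1 n, X i ω + 4 * B * log (2 * n / δ)} ≤
      ENNReal.ofReal (δ ^ 2 / 4 * (1 / (n : ℝ) ^ 2)) := by
  have hn0 : (0 : ℝ) < n := by exact_mod_cast hn
  set r := 2 * n / δ with hr
  have hsub : {ω | ¬ ∑ i ∈ Icc 1 n, μ[X i | ℱ (i - 1)] ω ≤
      2 * ∑ i ∈ Icc 1 n, X i ω + 4 * B * log r} ⊆
      {ω | log (r ^ 2) ≤ compensatedSum μ ℱ X B n ω} := by
    intro ω hω
    simp only [Set.mem_ofPred_eq, not_le] at hω ⊢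
    rw [compensatedSum, ← sum_div, sum_sub_distrib, ← mul_sum, le_div_iff₀ (by positivity),
      log_pow]
    push_cast
    linarith
  have hexp : exp (-log (r ^ 2)) = δ ^ 2 / 4 * (1 / (n : ℝ) ^ 2) := by
    rw [exp_neg, exp_log (by positivity), hr]
    field_simp
    ring
  calc _ ≤ μ {ω | log (r ^ 2) ≤ compensatedSum μ ℱ X B n ω} := measure_mono hsub
    _ ≤ _ := hexp ▸ measure_ge_le_exp_neg (integrable_exp_compensatedSum hB hadp hbdd n)
        (integral_exp_compensatedSum_le_one hB hadp hbdd n) _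

end CompensatedSum

lemma tsum_ofReal_sq_mul_inv_sq_le {δ : ℝ} (hδ0 : 0 ≤ δ) (hδ1 : δ ≤ 1) :
    ∑' n : ℕ, ENNReal.ofReal (δ ^ 2 / 4 * (1 / (n : ℝ) ^ 2)) ≤ ENNReal.ofReal δ := by
  have hsum := hasSum_zeta_two.mul_left (δ ^ 2 / 4)
  rw [← ENNReal.ofReal_tsum_of_nonneg (fun n ↦ by positivity) hsum.summable, hsum.tsum_eq]
  refine ENNReal.ofReal_le_ofReal ?_
  have hπ : π ^ 2 ≤ 16 := by nlinarith [pi_le_four, pi_pos]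
  nlinarith [sq_nonneg δ]

/-- Multiplicative anytime bound for adapted bounded nonnegative sequences: with
probability at least `1 - δ`, simultaneously for all `n ≥ 1`,
`∑_{i=1}^n E[X i | ℱ (i-1)] ≤ 2 ∑_{i=1}^n X i + 4 B log(2n/δ)`. -/
theorem anytime_multiplicative_bound
    {Ω : Type*} {m0 : MeasurableSpace Ω} {μ : Measure Ω} [IsProbabilityMeasure μ]
    (ℱ : Filtration ℕ m0) (X : ℕ → Ω → ℝ) (B : ℝ) (hB : 0 < B)
    (hadp : ∀ n, 1 ≤ n → StronglyMeasurable[ℱ n] (X n))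
    (hbdd : ∀ n, 1 ≤ n → ∀ᵐ ω ∂μ, X n ω ∈ Set.Icc (0 : ℝ) B)
    (δ : ℝ) (hδ : δ ∈ Set.Ioo (0 : ℝ) 1) :
    ENNReal.ofReal (1 - δ) ≤
      μ {ω | ∀ n : ℕ, 1 ≤ n →
        ∑ i ∈ Finset.Icc 1 n, (μ[X i | ℱ (i - 1)]) ω ≤
          2 * ∑ i ∈ Finset.Icc 1 n, X i ω + 4 * B * Real.log (2 * n / δ)} := by
  obtain ⟨hδ0, hδ1⟩ := hδ
  set T := {ω | ∀ n : ℕ, 1 ≤ n → ∑ i ∈ Icc 1 n, μ[X i | ℱ (i - 1)] ω ≤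
    2 * ∑ i ∈ Icc 1 n, X i ω + 4 * B * log (2 * n / δ)} with hT
  have hfail : μ Tᶜ ≤ ENNReal.ofReal δ := by
    rw [hT, Set.ofPred_forall, Set.compl_iInter]
    refine (measure_iUnion_le _).trans ((ENNReal.tsum_le_tsum fun n ↦ ?_).trans
      (tsum_ofReal_sq_mul_inv_sq_le hδ0.le hδ1.le))
    by_cases hn : 1 ≤ n
    · simpa only [hn, true_imp_iff, Set.compl_ofPred] using
        measure_not_sum_condExp_le_le hB hadp hbdd hδ0 hn
    · simp [hn]
  calc ENNReal.ofReal (1 - δ) = 1 - ENNReal.ofReal δ := by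
        rw [ENNReal.ofReal_sub 1 hδ0.le, ENNReal.ofReal_one]
    _ ≤ 1 - μ Tᶜ := tsub_le_tsub_left hfail 1
    _ ≤ μ T := by
        rw [tsub_le_iff_right, ← measure_univ (μ := μ)]
        exact measure_univ_le_add_compl T
end

section
/- Let X be a random variable with 0 ≤ X ≤ B almost surely for some constant B > 0, and let G be a sub-σ-algebra. Then almost surely E[exp(−X/B) | G] ≤ exp(−E[X | G]/(2B)). -/
open MeasureTheory ProbabilityTheory

lemma exp_neg_le_aux {t : ℝ} (ht0 : 0 ≤ t) (ht1 : t ≤ 1) :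
    Real.exp (-t) ≤ 1 - t / 2 := by
  have h := Real.quadratic_le_exp_of_nonneg ht0
  have hpos : (0:ℝ) < 1 + t + t ^ 2 / 2 := by positivity
  have h1 : Real.exp (-t) ≤ 1 / (1 + t + t ^ 2 / 2) := by
    rw [Real.exp_neg, one_div]
    exact inv_anti₀ hpos h
  refine h1.trans ?_
  rw [div_le_iff₀ hpos]
  nlinarith [sq_nonneg t, sq_nonneg (1 - t)]

/-- Conditional MGF bound: if `0 ≤ X ≤ B` almost surely, then almost surely
`E[exp(-X/B) | G] ≤ exp(-E[X | G] / (2B))`. -/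
theorem condexp_exp_neg_le
    {Ω : Type*} {G : MeasurableSpace Ω} {m0 : MeasurableSpace Ω} {μ : Measure Ω} [IsProbabilityMeasure μ]
    (hG : G ≤ m0)
    (X : Ω → ℝ) (B : ℝ) (hB : 0 < B)
    (hmeas : Measurable X)
    (hbdd : ∀ᵐ ω ∂μ, X ω ∈ Set.Icc (0 : ℝ) B) :
    ∀ᵐ ω ∂μ,
      (μ[fun ω' => Real.exp (-X ω' / B) | G]) ω ≤ Real.exp (-(μ[X | G]) ω / (2 * B)) := by
  set f : Ω → ℝ := fun ω => Real.exp (-X ω / B) with hf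
  set g : Ω → ℝ := fun ω => 1 - (2 * B)⁻¹ * X ω with hg
  have hXm : @Measurable Ω ℝ m0 _ X := hmeas
  have hX_int : Integrable X μ := by
    refine Integrable.mono' (integrable_const B) (hXm.aestronglyMeasurable (μ := μ)) ?_
    filter_upwards [hbdd] with ω ⟨h0, h1⟩
    rw [Real.norm_eq_abs, abs_of_nonneg h0]; exact h1
  have hf_int : Integrable f μ := by
    refine Integrable.mono' (integrable_const 1)
      ((Real.measurable_exp.comp ((hXm.neg).div_const B)).aestronglyMeasurable (μ := μ)) ?_
    filter_upwards [hbdd] with ω ⟨h0, h1⟩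
    rw [Real.norm_eq_abs, abs_of_pos (Real.exp_pos _)]
    refine Real.exp_le_one_iff.mpr ?_
    have : 0 ≤ X ω / B := div_nonneg h0 hB.le
    simpa [neg_div] using neg_nonpos.mpr this
  have hg_int : Integrable g μ :=
    (integrable_const (1:ℝ)).sub (hX_int.const_mul _)
  have hfg : f ≤ᵐ[μ] g := by
    filter_upwards [hbdd] with ω ⟨h0, h1⟩
    have ht0 : 0 ≤ X ω / B := div_nonneg h0 hB.le
    have ht1 : X ω / B ≤ 1 := (div_le_one hB).mpr h1
    have h2 := exp_neg_le_aux ht0 ht1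
    have hrw : (2 * B)⁻¹ * X ω = (X ω / B) / 2 := by ring
    show Real.exp (-X ω / B) ≤ 1 - (2 * B)⁻¹ * X ω
    rw [hrw, neg_div]
    exact h2
  have hmono := condExp_mono (m := G) hf_int hg_int hfg
  have hsub : μ[g | G] =ᵐ[μ] fun ω => 1 - (2 * B)⁻¹ * (μ[X | G]) ω := by
    have h1 : g = (fun _ => (1:ℝ)) - (2 * B)⁻¹ • X := by
      funext ω; simp [hg, smul_eq_mul]
    rw [h1]
    calc μ[(fun _ => (1:ℝ)) - (2 * B)⁻¹ • X | G]
        =ᵐ[μ] μ[(fun _ => (1:ℝ)) | G] - μ[(2 * B)⁻¹ • X | G] :=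
          condExp_sub (integrable_const _) (hX_int.smul _) G
      _ =ᵐ[μ] fun ω => 1 - (2 * B)⁻¹ * (μ[X | G]) ω := by
          filter_upwards [condExp_smul (m := G) (μ := μ) ((2 * B)⁻¹) X] with ω h
          simp only [Pi.sub_apply, h, Pi.smul_apply, smul_eq_mul,
            condExp_const hG (1:ℝ)]
  filter_upwards [hmono, hsub] with ω h1 h2
  calc (μ[f | G]) ω ≤ (μ[g | G]) ω := h1
    _ = 1 - (2 * B)⁻¹ * (μ[X | G]) ω := h2
    _ ≤ Real.exp (-(μ[X | G]) ω / (2 * B)) := by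
        have := Real.add_one_le_exp (-(μ[X | G]) ω / (2 * B))
        have hrw : -(μ[X | G]) ω / (2 * B) = -((2 * B)⁻¹ * (μ[X | G]) ω) := by
          field_simp
        linarith [hrw ▸ this]
end

section
/- Let (X_n)_{n≥1} be a sequence of random variables adapted to a filtration (F_n)_{n≥0} with 0 ≤ X_n ≤ B almost surely for some constant B > 0. Then for every n ≥ 1, E[exp((1/B)·∑_{i=1}^n ((1/2)·E[X_i | F_{i−1}] − X_i))] ≤ 1. -/
open MeasureTheory Finset

/-!
Write `D i = (1/B) ((1/2) E[X i | ℱ (i-1)] - X i)`. On `[0, 1]` we have `exp (-t) ≤ 1 - t/2`;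
since the right side is affine, conditioning gives
`E[exp (-X i / B) | ℱ (i-1)] ≤ 1 - E[X i | ℱ (i-1)] / (2B) ≤ exp (-E[X i | ℱ (i-1)] / (2B))`,
i.e. `E[exp (D i) | ℱ (i-1)] ≤ 1`. Hence `exp (∑_{i ≤ n} D i)` is a supermartingale starting at `1`:
pulling the `ℱ n`-measurable factor `exp (∑_{i ≤ n} D i)` out of `E[· | ℱ n]` gives the induction step.
-/

theorem Real.exp_neg_le_one_sub_half {t : ℝ} (h0 : 0 ≤ t) (h1 : t ≤ 1) :
    Real.exp (-t) ≤ 1 - t / 2 := by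
  have h : Real.exp (-t) * (1 + t) ≤ 1 := by
    calc Real.exp (-t) * (1 + t) ≤ Real.exp (-t) * Real.exp t := by
          gcongr; linarith [Real.add_one_le_exp t]
      _ = 1 := by rw [← Real.exp_add, neg_add_cancel, Real.exp_zero]
  nlinarith [Real.exp_pos (-t), mul_nonneg h0 (sub_nonneg.2 h1)]

namespace MeasureTheory

variable {Ω : Type*} {m m0 : MeasurableSpace Ω} {μ : Measure Ω}

section FiniteMeasure

variable [IsFiniteMeasure μ]

theorem integrable_exp_neg_div {X : Ω → ℝ} {B : ℝ} (hB : 0 ≤ B) (hX : AEStronglyMeasurable X μ)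
    (hX0 : 0 ≤ᵐ[μ] X) : Integrable (fun ω => Real.exp (-X ω / B)) μ := by
  refine .of_bound (by fun_prop) 1 ?_
  filter_upwards [hX0] with ω hω
  rw [Real.norm_of_nonneg (Real.exp_pos _).le, Real.exp_le_one_iff]
  exact div_nonpos_of_nonpos_of_nonneg (neg_nonpos.2 hω) hB

theorem condExp_exp_neg_div_le (hm : m ≤ m0) {X : Ω → ℝ} {B : ℝ} (hB : 0 < B)
    (hX : Integrable X μ) (hXB : ∀ᵐ ω ∂μ, X ω ∈ Set.Icc 0 B) :
    μ[fun ω => Real.exp (-X ω / B) | m] ≤ᵐ[μ] fun ω => Real.exp (-μ[X | m] ω / (2 * B)) := by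
  have hmono : μ[fun ω => Real.exp (-X ω / B) | m] ≤ᵐ[μ]
      μ[(fun _ => 1) - (2 * B)⁻¹ • X | m] := by
    refine condExp_mono (integrable_exp_neg_div hB.le hX.1 (hXB.mono fun _ h => h.1))
      ((integrable_const 1).sub (hX.smul _)) ?_
    filter_upwards [hXB] with ω hω
    have := Real.exp_neg_le_one_sub_half (div_nonneg hω.1 hB.le) ((div_le_one hB).2 hω.2)
    rw [Pi.sub_apply, Pi.smul_apply, smul_eq_mul, neg_div]
    exact this.trans_eq (by ring)
  have hlin : μ[(fun _ => 1) - (2 * B)⁻¹ • X | m] =ᵐ[μ]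
      fun ω => 1 - μ[X | m] ω / (2 * B) := by
    filter_upwards [condExp_sub (integrable_const 1) (hX.smul (2 * B)⁻¹) m,
      condExp_smul (μ := μ) (m := m) (2 * B)⁻¹ X] with ω hsub hsmul
    rw [hsub, Pi.sub_apply, hsmul, condExp_const hm]
    simp [div_eq_inv_mul]
  filter_upwards [hmono, hlin] with ω hω hω'
  rw [hω'] at hω
  refine hω.trans ?_
  simpa [neg_div] using Real.one_sub_le_exp_neg (μ[X | m] ω / (2 * B))

theorem condExp_exp_half_condExp_sub_le_one (hm : m ≤ m0) {X : Ω → ℝ} {B : ℝ} (hB : 0 < B)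
    (hX : Integrable X μ) (hXB : ∀ᵐ ω ∂μ, X ω ∈ Set.Icc 0 B) :
    μ[fun ω => Real.exp ((1 / B) * ((1 / 2) * μ[X | m] ω - X ω)) | m] ≤ᵐ[μ] 1 := by
  set c := μ[X | m]
  have hsplit : (fun ω => Real.exp ((1 / B) * ((1 / 2) * c ω - X ω))) =
      (fun ω => Real.exp (c ω / (2 * B))) * fun ω => Real.exp (-X ω / B) := by
    funext ω
    rw [Pi.mul_apply, ← Real.exp_add]
    congr 1
    field_simp
    ring
  have hbound : ∀ᵐ ω ∂μ, ‖Real.exp (c ω / (2 * B))‖ ≤ Real.exp (1 / 2) := by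
    filter_upwards [condExp_le_nonneg_const hB.le (hXB.mono fun _ h => h.2)] with ω hω
    rw [Real.norm_of_nonneg (Real.exp_pos _).le, Real.exp_le_exp, div_le_iff₀ (by positivity)]
    linarith
  have hpull : μ[(fun ω => Real.exp (c ω / (2 * B))) * (fun ω => Real.exp (-X ω / B)) | m]
      =ᵐ[μ] (fun ω => Real.exp (c ω / (2 * B))) * μ[fun ω => Real.exp (-X ω / B) | m] :=
    condExp_stronglyMeasurable_mul_of_bound hm
    ((Real.continuous_exp.comp (continuous_id.div_const _)).comp_stronglyMeasurable
      stronglyMeasurable_condExp)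
    (integrable_exp_neg_div hB.le hX.1 (hXB.mono fun _ h => h.1)) _ hbound
  filter_upwards [hpull, condExp_exp_neg_div_le hm hB hX hXB] with ω hω hle
  rw [hsplit, hω, Pi.mul_apply, Pi.one_apply]
  calc Real.exp (c ω / (2 * B)) * μ[fun ω => Real.exp (-X ω / B) | m] ω
      ≤ Real.exp (c ω / (2 * B)) * Real.exp (-c ω / (2 * B)) := by gcongr
    _ = 1 := by rw [← Real.exp_add, neg_div, add_neg_cancel, Real.exp_zero]

theorem integral_mul_le_integral_of_condExp_le_one (hm : m ≤ m0) {f g : Ω → ℝ} {C : ℝ}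
    (hf : StronglyMeasurable[m] f) (hf0 : 0 ≤ᵐ[μ] f) (hfC : ∀ᵐ ω ∂μ, ‖f ω‖ ≤ C)
    (hg : Integrable g μ) (hcond : μ[g | m] ≤ᵐ[μ] 1) :
    ∫ ω, f ω * g ω ∂μ ≤ ∫ ω, f ω ∂μ := by
  have hf' : AEStronglyMeasurable f μ := (hf.mono hm).aestronglyMeasurable
  calc ∫ ω, f ω * g ω ∂μ = ∫ ω, μ[f * g | m] ω ∂μ := (integral_condExp hm).symm
    _ = ∫ ω, f ω * μ[g | m] ω ∂μ :=
      integral_congr_ae (condExp_stronglyMeasurable_mul_of_bound hm hf hg C hfC)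
    _ ≤ ∫ ω, f ω ∂μ := by
      refine integral_mono_ae (integrable_condExp.bdd_mul hf' hfC) (.of_bound hf' C hfC) ?_
      filter_upwards [hf0, hcond] with ω h0 h1
      exact mul_le_of_le_one_right h0 h1

end FiniteMeasure

theorem integral_exp_sum_Icc_le_one [IsProbabilityMeasure μ] (ℱ : Filtration ℕ m0)
    {D : ℕ → Ω → ℝ} {C : ℝ} (hD : ∀ i, 1 ≤ i → StronglyMeasurable[ℱ i] (D i))
    (hDC : ∀ i, 1 ≤ i → ∀ᵐ ω ∂μ, D i ω ≤ C)
    (hcond : ∀ i, 1 ≤ i → μ[fun ω => Real.exp (D i ω) | ℱ (i - 1)] ≤ᵐ[μ] 1) (n : ℕ) :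
    ∫ ω, Real.exp (∑ i ∈ Icc 1 n, D i ω) ∂μ ≤ 1 := by
  induction n with
  | zero => simp
  | succ n ih =>
    have hS : StronglyMeasurable[ℱ n] fun ω => ∑ i ∈ Icc 1 n, D i ω :=
      Finset.stronglyMeasurable_fun_sum _ fun i hi =>
        (hD i (mem_Icc.1 hi).1).mono (ℱ.mono (mem_Icc.1 hi).2)
    have hSC : ∀ᵐ ω ∂μ, ‖Real.exp (∑ i ∈ Icc 1 n, D i ω)‖ ≤ Real.exp (n * C) := by
      filter_upwards [(Icc 1 n).eventually_all.2 fun i hi => hDC i (mem_Icc.1 hi).1] with ω hω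
      rw [Real.norm_of_nonneg (Real.exp_pos _).le, Real.exp_le_exp]
      simpa using Finset.sum_le_sum hω
    have hDint : Integrable (fun ω => Real.exp (D (n + 1) ω)) μ := by
      refine .of_bound (Real.continuous_exp.comp_aestronglyMeasurable
        ((hD (n + 1) (by omega)).mono (ℱ.le _)).aestronglyMeasurable) (Real.exp C) ?_
      filter_upwards [hDC (n + 1) (by omega)] with ω hω
      rwa [Real.norm_of_nonneg (Real.exp_pos _).le, Real.exp_le_exp]
    calc ∫ ω, Real.exp (∑ i ∈ Icc 1 (n + 1), D i ω) ∂μ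
        = ∫ ω, Real.exp (∑ i ∈ Icc 1 n, D i ω) * Real.exp (D (n + 1) ω) ∂μ := by
          simp_rw [sum_Icc_succ_top (Nat.le_add_left 1 n), Real.exp_add]
      _ ≤ ∫ ω, Real.exp (∑ i ∈ Icc 1 n, D i ω) ∂μ :=
          integral_mul_le_integral_of_condExp_le_one (ℱ.le n) (Real.continuous_exp.comp_stronglyMeasurable hS)
            (.of_forall fun _ => (Real.exp_pos _).le) hSC hDint (hcond (n + 1) (by omega))
      _ ≤ 1 := ih

end MeasureTheory

theorem integral_exp_sum_le_one_general
    {Ω : Type*} {m0 : MeasurableSpace Ω} {μ : Measure Ω} [IsProbabilityMeasure μ]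
    (ℱ : Filtration ℕ m0) (X : ℕ → Ω → ℝ) (B : ℝ) (hB : 0 < B)
    (hadp : ∀ n, 1 ≤ n → StronglyMeasurable[ℱ n] (X n))
    (hbdd : ∀ n, 1 ≤ n → ∀ᵐ ω ∂μ, X n ω ∈ Set.Icc (0 : ℝ) B)
    (n : ℕ) :
    ∫ ω, Real.exp ((1 / B) *
        ∑ i ∈ Finset.Icc 1 n, ((1 / 2) * (μ[X i | ℱ (i - 1)]) ω - X i ω)) ∂μ ≤ 1 := by
  have hXint : ∀ i, 1 ≤ i → Integrable (X i) μ := fun i hi =>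
    .of_mem_Icc 0 B ((hadp i hi).mono (ℱ.le i)).measurable.aemeasurable (hbdd i hi)
  simp_rw [Finset.mul_sum]
  refine integral_exp_sum_Icc_le_one ℱ (C := 1 / 2) (fun i hi => ?_) (fun i hi => ?_)
    (fun i hi => condExp_exp_half_condExp_sub_le_one (ℱ.le _) hB (hXint i hi) (hbdd i hi)) n
  · exact (((stronglyMeasurable_condExp.mono (ℱ.mono (Nat.sub_le i 1))).const_mul _).sub
      (hadp i hi)).const_mul _
  · filter_upwards [condExp_le_nonneg_const (m := ℱ (i - 1)) hB.le
      ((hbdd i hi).mono fun _ h => h.2), hbdd i hi] with ω hc hX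
    rw [div_mul_eq_mul_div, one_mul, div_le_iff₀ hB]
    linarith [hX.1]

/-- For an adapted sequence `(X n)` with `0 ≤ X n ≤ B` almost surely, for every `n ≥ 1`,
`E[exp((1/B) ∑_{i=1}^n ((1/2) E[X i | ℱ (i-1)] - X i))] ≤ 1`. -/
theorem integral_exp_sum_le_one
    {Ω : Type*} {m0 : MeasurableSpace Ω} {μ : Measure Ω} [IsProbabilityMeasure μ]
    (ℱ : Filtration ℕ m0) (X : ℕ → Ω → ℝ) (B : ℝ) (hB : 0 < B)
    (hadp : ∀ n, 1 ≤ n → StronglyMeasurable[ℱ n] (X n))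
    (hbdd : ∀ n, 1 ≤ n → ∀ᵐ ω ∂μ, X n ω ∈ Set.Icc (0 : ℝ) B)
    (n : ℕ) (hn : 1 ≤ n) :
    ∫ ω, Real.exp ((1 / B) *
        ∑ i ∈ Finset.Icc 1 n, ((1 / 2) * (μ[X i | ℱ (i - 1)]) ω - X i ω)) ∂μ ≤ 1 :=
  integral_exp_sum_le_one_general ℱ X B hB hadp hbdd n
end

section
/- Let p, q, A be nonnegative real numbers with q ≤ 1. If |p − q| ≤ 4·√(q·A) + 28·A, then √q ≤ √p + 10·√A, and consequently |p − q| ≤ 4·√(p·A) + 68·A. -/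
/-- Converting an empirically-centered Bernstein confidence bound to one centered at the
true probability: if `|p - q| ≤ 4√(qA) + 28A` with `0 ≤ q ≤ 1`, then
`√q ≤ √p + 10√A`, and consequently `|p - q| ≤ 4√(pA) + 68A`. -/
theorem bernstein_recenter (p q A : ℝ) (hp : 0 ≤ p) (hq : 0 ≤ q) (hq1 : q ≤ 1) (hA : 0 ≤ A)
    (h : |p - q| ≤ 4 * Real.sqrt (q * A) + 28 * A) :
    Real.sqrt q ≤ Real.sqrt p + 10 * Real.sqrt A ∧
      |p - q| ≤ 4 * Real.sqrt (p * A) + 68 * A := by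
  set sq := Real.sqrt q with hsq
  set sp := Real.sqrt p with hsp
  set sA := Real.sqrt A with hsA
  have hsq0 : 0 ≤ sq := Real.sqrt_nonneg q
  have hsp0 : 0 ≤ sp := Real.sqrt_nonneg p
  have hsA0 : 0 ≤ sA := Real.sqrt_nonneg A
  have hq2 : sq ^ 2 = q := Real.sq_sqrt hq
  have hp2 : sp ^ 2 = p := Real.sq_sqrt hp
  have hA2 : sA ^ 2 = A := Real.sq_sqrt hA
  have hqA : Real.sqrt (q * A) = sq * sA := Real.sqrt_mul hq A
  have hpA : Real.sqrt (p * A) = sp * sA := Real.sqrt_mul hp A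
  rw [hqA] at h
  have habs := abs_le.mp h
  have h1 : sq ≤ sp + 10 * sA := by
    by_contra hcon
    push_neg at hcon
    nlinarith [habs.1, sq_nonneg (sq - sp), sq_nonneg (sq - sA), mul_nonneg hsp0 hsA0,
      mul_nonneg hsq0 hsA0, mul_nonneg hsA0 (by nlinarith : (0:ℝ) ≤ sq - sp - 10*sA)]
  refine ⟨h1, ?_⟩
  rw [hpA]
  have key : sq * sA ≤ sp * sA + 10 * sA ^ 2 := by nlinarith [mul_le_mul_of_nonneg_right h1 hsA0]
  rw [abs_le] at h ⊢
  constructor <;> nlinarith [habs.1, habs.2]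
end
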